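/- Let M = [[A, B],[B*, C]] be a positive semidefinite 2×2 block operator matrix. For any operator P on H₁ with P*P = S(M;{0}) and any R on H₂ with R*R = C, there exists Q : H₁ → H₂ with ran Q ⊆ closure(ran R) such that M equals the product [[P*, Q*],[0, R*]]·[[P, 0],[Q, R]]. -/

import Mathlib

open scoped InnerProductSpace
open ContinuousLinearMap

/-- Positivity of the block operator matrix `[[A, B], [B*, C]]` on `H₁ ⊕ H₂`,
expressed through its quadratic form. -/
def BlockPos2 {H₁ H₂ : Type*} [NormedAddCommGroup H₁] [InnerProductSpace ℂ H₁]
    [NormedAddCommGroup H₂] [InnerProductSpace ℂ H₂]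
    (A : H₁ →L[ℂ] H₁) (B : H₂ →L[ℂ] H₁) (C : H₂ →L[ℂ] H₂) : Prop :=
  ∀ (x : H₁) (y : H₂),
    0 ≤ (⟪A x, x⟫_ℂ).re + 2 * (⟪B y, x⟫_ℂ).re + (⟪C y, y⟫_ℂ).re

/-- `S` is the Schur complement of the positive block operator matrix
`[[A, B], [B*, C]]` supported on the first block. -/
def IsSchurComplementFst {H₁ H₂ : Type*} [NormedAddCommGroup H₁] [InnerProductSpace ℂ H₁]
    [NormedAddCommGroup H₂] [InnerProductSpace ℂ H₂] [CompleteSpace H₁] [CompleteSpace H₂]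
    (A : H₁ →L[ℂ] H₁) (B : H₂ →L[ℂ] H₁) (C : H₂ →L[ℂ] H₂) (S : H₁ →L[ℂ] H₁) : Prop :=
  S.IsPositive ∧ BlockPos2 (A - S) B C ∧
    ∀ X : H₁ →L[ℂ] H₁, X.IsPositive → BlockPos2 (A - X) B C →
      ∀ x : H₁, (⟪X x, x⟫_ℂ).re ≤ (⟪S x, x⟫_ℂ).re

/-!
Cauchy–Schwarz for the positive block operator `[[A - P*P, B], [B*, R*R]]` gives
`‖B y‖ ≤ c ‖R y‖`, so Douglas' factorisation writes `B = Q* R` with `ran Q ⊆ closure (ran R)`.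
For such `Q`, positivity of `[[D, Q*R], [R*Q, R*R]]` is equivalent to `Q*Q ≤ D`: one direction is
`‖Q x + R y‖² ≥ 0`, the other lets `R y` tend to `-Q x`. With `D = A - P*P` this gives
`P*P + Q*Q ≤ A`. Conversely `X = A - Q*Q` is then positive with `[[Q*Q, Q*R], [R*Q, R*R]] ≥ 0`,
so maximality of the Schur complement gives `X ≤ P*P`.
-/

open scoped InnerProduct

namespace ContinuousLinearMap

variable {𝕜 E F G : Type*} [RCLike 𝕜]
  [NormedAddCommGroup E] [InnerProductSpace 𝕜 E] [CompleteSpace E]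
  [NormedAddCommGroup F] [NormedSpace 𝕜 F]
  [NormedAddCommGroup G] [InnerProductSpace 𝕜 G] [CompleteSpace G]

theorem le_of_forall_re_inner_le {S T : E →L[𝕜] E} (hS : IsSelfAdjoint S) (hT : IsSelfAdjoint T)
    (h : ∀ x, RCLike.re (inner 𝕜 (S x) x) ≤ RCLike.re (inner 𝕜 (T x) x)) : S ≤ T := by
  rw [le_def, isPositive_def']
  refine ⟨hT.sub hS, fun x ↦ ?_⟩
  simpa [reApplyInnerSelf_apply, inner_sub_left] using h x

theorem exists_adjoint_comp_eq_of_norm_le {B : F →L[𝕜] E} {R : F →L[𝕜] G} {c : ℝ}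
    (hB : ∀ y, ‖B y‖ ≤ c * ‖R y‖) :
    ∃ Q : E →L[𝕜] G, Set.range Q ⊆ closure (Set.range R) ∧ Q† ∘L R = B := by
  set K := R.range.topologicalClosure
  let e : F →ₗ[𝕜] K :=
    (R : F →ₗ[𝕜] G).codRestrict K fun y ↦ R.range.le_topologicalClosure ⟨y, rfl⟩
  have he : DenseRange e := by
    rw [DenseRange, Subtype.dense_iff, ← Set.range_comp]
    exact (Submodule.topologicalClosure_coe _).subset
  let S : K →L[𝕜] E := (B : F →ₗ[𝕜] E).extendOfNorm e
  refine ⟨(S ∘L K.orthogonalProjectionOnto)†, ?_, ?_⟩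
  · rw [adjoint_comp, Submodule.adjoint_orthogonalProjectionOnto]
    rintro _ ⟨x, rfl⟩
    exact (S.adjoint x).2
  · ext y
    have hproj : K.orthogonalProjectionOnto (R y) = e y :=
      Submodule.orthogonalProjectionOnto_mem_subspace_eq_self (e y)
    rw [adjoint_adjoint, comp_apply, comp_apply, hproj]
    exact LinearMap.extendOfNorm_eq he ⟨c, hB⟩ y

theorem re_inner_adjoint_comp_self_apply {H H' : Type*}
    [NormedAddCommGroup H] [InnerProductSpace ℂ H] [CompleteSpace H]
    [NormedAddCommGroup H'] [InnerProductSpace ℂ H'] [CompleteSpace H']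
    (R : H →L[ℂ] H') (y : H) : (⟪(R† ∘L R) y, y⟫_ℂ).re = ‖R y‖ ^ 2 :=
  (R.apply_norm_sq_eq_inner_adjoint_left y).symm

end ContinuousLinearMap

namespace BlockPos2

variable {H₁ H₂ : Type*} [NormedAddCommGroup H₁] [InnerProductSpace ℂ H₁]
  [NormedAddCommGroup H₂] [InnerProductSpace ℂ H₂]
  {A : H₁ →L[ℂ] H₁} {B : H₂ →L[ℂ] H₁} {C : H₂ →L[ℂ] H₂}

theorem sq_re_inner_le (h : BlockPos2 A B C) (x : H₁) (y : H₂) :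
    (⟪B y, x⟫_ℂ).re ^ 2 ≤ (⟪A x, x⟫_ℂ).re * (⟪C y, y⟫_ℂ).re := by
  have hquad : ∀ t : ℝ,
      0 ≤ (⟪A x, x⟫_ℂ).re * (t * t) + 2 * (⟪B y, x⟫_ℂ).re * t + (⟪C y, y⟫_ℂ).re := by
    intro t
    have := h ((t : ℂ) • x) y
    simp only [map_smul, inner_smul_left, inner_smul_right, Complex.conj_ofReal,
      Complex.re_ofReal_mul] at this
    linarith
  have := discrim_le_zero hquad
  rw [discrim] at this
  linarith

theorem norm_sq_le (h : BlockPos2 A B C) (y : H₂) :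
    ‖B y‖ ^ 2 ≤ ‖A‖ * (⟪C y, y⟫_ℂ).re := by
  have hC : 0 ≤ (⟪C y, y⟫_ℂ).re := by simpa using h 0 y
  have hA : (⟪A (B y), B y⟫_ℂ).re ≤ ‖A‖ * ‖B y‖ ^ 2 :=
    calc (⟪A (B y), B y⟫_ℂ).re ≤ ‖A (B y)‖ * ‖B y‖ :=
        (Complex.re_le_norm _).trans (norm_inner_le_norm _ _)
      _ ≤ ‖A‖ * ‖B y‖ * ‖B y‖ := by gcongr; exact A.le_opNorm _
      _ = ‖A‖ * ‖B y‖ ^ 2 := by ring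
  have hCS := h.sq_re_inner_le (B y) y
  rw [← RCLike.re_to_complex, inner_self_eq_norm_sq] at hCS
  rcases (sq_nonneg ‖B y‖).eq_or_lt with hzero | hpos
  · rw [← hzero]; positivity
  · refine le_of_mul_le_mul_left ?_ hpos
    calc ‖B y‖ ^ 2 * ‖B y‖ ^ 2 = (‖B y‖ ^ 2) ^ 2 := by ring
      _ ≤ _ := hCS
      _ ≤ ‖A‖ * ‖B y‖ ^ 2 * (⟪C y, y⟫_ℂ).re := by gcongr
      _ = _ := by ring

theorem norm_le_sqrt_mul_norm [CompleteSpace H₂] {H₃ : Type*} [NormedAddCommGroup H₃]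
    [InnerProductSpace ℂ H₃] [CompleteSpace H₃] {R : H₂ →L[ℂ] H₃}
    (h : BlockPos2 A B (R† ∘L R)) (y : H₂) : ‖B y‖ ≤ √‖A‖ * ‖R y‖ := by
  have := h.norm_sq_le y
  rw [R.re_inner_adjoint_comp_self_apply] at this
  calc ‖B y‖ ≤ √(‖A‖ * ‖R y‖ ^ 2) := Real.le_sqrt_of_sq_le this
    _ = √‖A‖ * ‖R y‖ := by rw [Real.sqrt_mul (norm_nonneg _), Real.sqrt_sq (norm_nonneg _)]

end BlockPos2

theorem blockPos2_adjoint_comp_iff {H₁ H₂ H₃ : Type*}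
    [NormedAddCommGroup H₁] [InnerProductSpace ℂ H₁] [CompleteSpace H₁]
    [NormedAddCommGroup H₂] [InnerProductSpace ℂ H₂] [CompleteSpace H₂]
    [NormedAddCommGroup H₃] [InnerProductSpace ℂ H₃] [CompleteSpace H₃]
    {D : H₁ →L[ℂ] H₁} {Q : H₁ →L[ℂ] H₃} {R : H₂ →L[ℂ] H₃}
    (hQ : Set.range Q ⊆ closure (Set.range R)) :
    BlockPos2 D (Q† ∘L R) (R† ∘L R) ↔ ∀ x, ‖Q x‖ ^ 2 ≤ (⟪D x, x⟫_ℂ).re := by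
  have hQR : ∀ x y, ⟪(Q† ∘L R) y, x⟫_ℂ = ⟪R y, Q x⟫_ℂ := fun x y ↦ by
    rw [comp_apply, adjoint_inner_left]
  simp only [BlockPos2, hQR, re_inner_adjoint_comp_self_apply]
  constructor
  · intro h x
    have hclosed : closure (Set.range R) ⊆
        {z | 0 ≤ (⟪D x, x⟫_ℂ).re - 2 * (⟪z, Q x⟫_ℂ).re + ‖z‖ ^ 2} := by
      refine closure_minimal ?_ (isClosed_le continuous_const (by fun_prop))
      rintro _ ⟨y, rfl⟩
      simpa [sub_eq_add_neg] using h x (-y)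
    have hx : 0 ≤ (⟪D x, x⟫_ℂ).re - 2 * (⟪Q x, Q x⟫_ℂ).re + ‖Q x‖ ^ 2 :=
      hclosed (hQ ⟨x, rfl⟩)
    rw [← RCLike.re_to_complex (x := ⟪Q x, Q x⟫_ℂ), inner_self_eq_norm_sq] at hx
    linarith
  · intro h x y
    have := norm_add_sq (𝕜 := ℂ) (R y) (Q x)
    rw [RCLike.re_to_complex] at this
    nlinarith [h x, sq_nonneg ‖R y + Q x‖]

theorem exists_Q_of_schur_factor
    {H₁ H₂ : Type*} [NormedAddCommGroup H₁] [InnerProductSpace ℂ H₁]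
    [NormedAddCommGroup H₂] [InnerProductSpace ℂ H₂] [CompleteSpace H₁] [CompleteSpace H₂]
    (A P : H₁ →L[ℂ] H₁) (C R : H₂ →L[ℂ] H₂) (B : H₂ →L[ℂ] H₁)
    (hAsa : IsSelfAdjoint A)
    (hP : IsSchurComplementFst A B C (P.adjoint ∘L P))
    (hR : R.adjoint ∘L R = C) :
    ∃ Q : H₁ →L[ℂ] H₂, Set.range Q ⊆ closure (Set.range R) ∧
      A = P.adjoint ∘L P + Q.adjoint ∘L Q ∧
      B = Q.adjoint ∘L R := by
  subst hR
  obtain ⟨-, hPblock, hPmax⟩ := hP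
  obtain ⟨Q, hQR, rfl⟩ := exists_adjoint_comp_eq_of_norm_le hPblock.norm_le_sqrt_mul_norm
  have hPP := isPositive_adjoint_comp_self P
  have hQQ := isPositive_adjoint_comp_self Q
  have hlower : P† ∘L P + Q† ∘L Q ≤ A := by
    rw [← le_sub_iff_add_le']
    exact le_of_forall_re_inner_le hQQ.isSelfAdjoint (hAsa.sub hPP.isSelfAdjoint) fun x ↦
      (re_inner_adjoint_comp_self_apply Q x).trans_le
        ((blockPos2_adjoint_comp_iff hQR).1 hPblock x)
  have hX : (A - Q† ∘L Q).IsPositive := by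
    rw [← nonneg_iff_isPositive, sub_nonneg]
    exact (le_add_of_nonneg_left ((nonneg_iff_isPositive _).2 hPP)).trans hlower
  have hXblock : BlockPos2 (A - (A - Q† ∘L Q)) (Q† ∘L R) (R† ∘L R) := by
    rw [sub_sub_cancel]
    exact (blockPos2_adjoint_comp_iff hQR).2 fun x ↦ (re_inner_adjoint_comp_self_apply Q x).ge
  have hupper : A - Q† ∘L Q ≤ P† ∘L P :=
    le_of_forall_re_inner_le hX.isSelfAdjoint hPP.isSelfAdjoint (hPmax _ hX hXblock)
  exact ⟨Q, hQR, le_antisymm (sub_le_iff_le_add.1 hupper) hlower, rfl⟩
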